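/- Let φ be a Möbius transform of B_d with coordinate functions φ¹,…,φ^d and let λ = φ^{-1}(0). Define Φ : (H²_d)^d → H²_d by Φ(ξ_1,…,ξ_d) = Σ_k φ^k ξ_k (multiplication operators). Then Φ is a partial isometry whose range equals {ξ ∈ H²_d : ξ(λ) = 0} = {k_λ}^⊥. Equivalently, 1 - ΦΦ* is the rank-one orthogonal projection onto ℂ k_λ. -/

import Mathlib

noncomputable section

open scoped ComplexConjugate
open ContinuousLinearMap

/-- `ℂ^d` with its Hermitian inner product. -/
abbrev Ed (d : ℕ) : Type := EuclideanSpace ℂ (Fin d)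

/-- The Möbius transform `φ_λ` of the unit ball of `ℂ^d`, with `φ_λ(λ) = 0`, given by
`φ_λ(z) = (P_{ℂλ} z - λ - √(1-|λ|²)·P_{ℂλ}^⊥ z)/(1 - ⟨z,λ⟩)`.
Note: the paper's inner product `⟨z,w⟩ = Σ z_k conj(w_k)` is Mathlib's `inner w z`. -/
def mobius {d : ℕ} (lam z : Ed d) : Ed d :=
  (1 - (inner ℂ lam z : ℂ))⁻¹ •
    (((Submodule.orthogonalProjectionOnto (ℂ ∙ lam) z : Ed d)) - lam -
      ((Real.sqrt (1 - ‖lam‖ ^ 2) : ℂ) • (z - (Submodule.orthogonalProjectionOnto (ℂ ∙ lam) z : Ed d))))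

/-- An axiomatization of the Drury–Arveson space `H²_d`: a Hilbert space `H` with kernel
vectors `kfun z = k_z` (for `z` in the open unit ball) satisfying
`⟨k_w, k_z⟩_{paper} = 1/(1-⟨z,w⟩_{paper})`, i.e. in Mathlib's conjugate-linear-in-the-first-slot
convention `inner (k z) (k w) = (1 - inner w z)⁻¹`, whose span is dense, together with the
commuting coordinate multiplication operators `S i` characterized by
`(S i)* k_z = conj (z_i) • k_z`.  The evaluation of `ξ ∈ H` at `z` is `ξ(z) = ⟨ξ, k_z⟩_{paper}
= inner (kfun z) ξ`, and `k_0 = 1` is the constant function 1. -/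
structure DAData (d : ℕ) (H : Type*) [NormedAddCommGroup H] [InnerProductSpace ℂ H]
    [CompleteSpace H] where
  kfun : Ed d → H
  kernel_eq : ∀ z w : Ed d, ‖z‖ < 1 → ‖w‖ < 1 →
    (inner ℂ (kfun z) (kfun w) : ℂ) = (1 - (inner ℂ w z : ℂ))⁻¹
  dense_span : Dense (Submodule.span ℂ (kfun '' {z : Ed d | ‖z‖ < 1}) : Set H)
  S : Fin d → H →L[ℂ] H
  comm : ∀ i j, S i ∘L S j = S j ∘L S i
  adjoint_S : ∀ (i : Fin d) (z : Ed d), ‖z‖ < 1 →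
    ContinuousLinearMap.adjoint (S i) (kfun z) = conj (z i) • kfun z

lemma inner_self_c {d : ℕ} (lam : Ed d) : (inner ℂ lam lam : ℂ) = ((‖lam‖ : ℂ)) ^ 2 := by
  rw [inner_self_eq_norm_sq_to_K]; norm_cast

lemma one_sub_inner_ne_zero {d : ℕ} {z w : Ed d} (hz : ‖z‖ < 1) (hw : ‖w‖ ≤ 1) :
    (1 : ℂ) - inner ℂ z w ≠ 0 := by
  intro h
  have h1 : (inner ℂ z w : ℂ) = 1 := by linear_combination -h
  have h2 := norm_inner_le_norm (𝕜 := ℂ) z w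
  rw [h1] at h2
  simp only [norm_one] at h2
  nlinarith [norm_nonneg z, norm_nonneg w]

lemma proj_coeff {d : ℕ} (lam z : Ed d) :
    ∃ c : ℂ, (Submodule.orthogonalProjectionOnto (ℂ ∙ lam) z : Ed d) = c • lam := by
  have h := (Submodule.orthogonalProjectionOnto (ℂ ∙ lam) z).2
  rw [Submodule.mem_span_singleton] at h
  obtain ⟨c, hc⟩ := h
  exact ⟨c, hc.symm⟩

lemma proj_self {d : ℕ} (lam : Ed d) :
    (Submodule.orthogonalProjectionOnto (ℂ ∙ lam) lam : Ed d) = lam :=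
  Submodule.starProjection_eq_self_iff.mpr (Submodule.mem_span_singleton_self lam)

lemma mobius_inner {d : ℕ} (lam z w : Ed d) (hlam : ‖lam‖ < 1)
    (hz : (1 : ℂ) - inner ℂ z lam ≠ 0) (hw : (1 : ℂ) - inner ℂ lam w ≠ 0) :
    (inner ℂ (mobius lam z) (mobius lam w) : ℂ) =
      1 - (1 - (‖lam‖ : ℂ) ^ 2) * (1 - inner ℂ z w) /
        ((1 - inner ℂ z lam) * (1 - inner ℂ lam w)) := by
  have hnl : (0 : ℝ) ≤ 1 - ‖lam‖ ^ 2 := by nlinarith [norm_nonneg lam]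
  obtain ⟨c, hc⟩ := proj_coeff lam z
  obtain ⟨e, he⟩ := proj_coeff lam w
  have hq : (inner ℂ z lam : ℂ) = conj c * inner ℂ lam lam := by
    have h1 : inner ℂ (Submodule.orthogonalProjectionOnto (ℂ ∙ lam) z : Ed d) lam = inner ℂ z (Submodule.orthogonalProjectionOnto (ℂ ∙ lam) lam : Ed d) :=
      Submodule.inner_starProjection_left_eq_right (ℂ ∙ lam) z lam
    rw [hc, proj_self, inner_smul_left] at h1
    exact h1.symm
  have hr : (inner ℂ lam w : ℂ) = e * inner ℂ lam lam := by
    have h1 : inner ℂ (Submodule.orthogonalProjectionOnto (ℂ ∙ lam) lam : Ed d) w = inner ℂ lam (Submodule.orthogonalProjectionOnto (ℂ ∙ lam) w : Ed d) :=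
      Submodule.inner_starProjection_left_eq_right (ℂ ∙ lam) lam w
    rw [he, proj_self, inner_smul_right] at h1
    exact h1
  have hs2 : ((Real.sqrt (1 - ‖lam‖ ^ 2) : ℝ) : ℂ) ^ 2 = 1 - (inner ℂ lam lam : ℂ) := by
    rw [inner_self_c]; norm_cast; exact Real.sq_sqrt hnl
  have hT2 : (inner ℂ lam lam : ℂ) = 1 - ((Real.sqrt (1 - ‖lam‖ ^ 2) : ℝ) : ℂ) ^ 2 := by
    linear_combination hs2
  have hz' : (1 : ℂ) - conj c * (1 - ((Real.sqrt (1 - ‖lam‖ ^ 2) : ℝ) : ℂ) ^ 2) ≠ 0 := by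
    rw [← hT2, ← hq]; exact hz
  have hw' : (1 : ℂ) - e * (1 - ((Real.sqrt (1 - ‖lam‖ ^ 2) : ℝ) : ℂ) ^ 2) ≠ 0 := by
    rw [← hT2, ← hr]; exact hw
  rw [mobius, mobius, hc, he, ← inner_self_c]
  simp only [inner_smul_left, inner_smul_right, inner_sub_left, inner_sub_right,
    map_sub, map_one, map_inv₀, map_mul, Complex.conj_ofReal, inner_conj_symm]
  rw [hq, hr, hT2]
  generalize ((Real.sqrt (1 - ‖lam‖ ^ 2) : ℝ) : ℂ) = s at hz' hw' ⊢
  generalize conj c = cc at hz' ⊢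
  have hz3 : 1 + s ^ 2 * cc - cc ≠ 0 := by intro h; apply hz'; linear_combination h
  field_simp
  linear_combination (1 + s ^ 2 * e - e) * mul_inv_cancel₀ hz3

lemma mobius_self {d : ℕ} (lam : Ed d) (hlam : ‖lam‖ < 1) : mobius lam lam = 0 := by
  have hN : (1 : ℂ) - inner ℂ lam lam ≠ 0 := one_sub_inner_ne_zero hlam hlam.le
  have h := mobius_inner lam lam lam hlam hN hN
  rw [← inner_self_c lam, div_self (mul_ne_zero hN hN), sub_self] at h
  exact inner_self_eq_zero.mp h

/-- let `φ = u ∘ φ_λ` be a Möbius transform of the ball (`u` unitary,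
`λ = φ⁻¹(0)`), and let `Φ i` be the operator of multiplication by the coordinate function
`φ^i` on `H²_d` (characterized by `(Φ i)* k_z = conj (φ(z)_i) • k_z`).  Then the row operator
`(Φ 1 … Φ d)` is a partial isometry with range `{ξ : ξ(λ) = 0} = {k_λ}^⊥`; equivalently,
`1 - Σ_i (Φ i)(Φ i)*` is the rank-one orthogonal projection onto `ℂ k_λ` and the range of the
row operator is `{ξ : ⟨ξ, k_λ⟩ = 0}`. -/
theorem stmt_5 {d : ℕ} {H : Type*} [NormedAddCommGroup H] [InnerProductSpace ℂ H]
    [CompleteSpace H] (D : DAData d H)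
    (lam : Ed d) (hlam : ‖lam‖ < 1) (u : Ed d ≃ₗᵢ[ℂ] Ed d)
    (Φ : Fin d → H →L[ℂ] H)
    (hΦ : ∀ (i : Fin d) (z : Ed d), ‖z‖ < 1 →
      ContinuousLinearMap.adjoint (Φ i) (D.kfun z) = conj ((u (mobius lam z)) i) • D.kfun z) :
    (∀ ξ : H, ξ - ∑ i : Fin d, Φ i (ContinuousLinearMap.adjoint (Φ i) ξ) =
      ((inner ℂ (D.kfun lam) ξ : ℂ) / (inner ℂ (D.kfun lam) (D.kfun lam) : ℂ)) • D.kfun lam) ∧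
    Set.range (fun v : Fin d → H => ∑ i : Fin d, Φ i (v i)) =
      {ξ : H | (inner ℂ (D.kfun lam) ξ : ℂ) = 0} := by
  have hinner : ∀ z w : Ed d, ‖z‖ < 1 → ‖w‖ < 1 →
      (inner ℂ (D.kfun w) (D.kfun z - ∑ i : Fin d, Φ i (ContinuousLinearMap.adjoint (Φ i) (D.kfun z)) -
        ((inner ℂ (D.kfun lam) (D.kfun z) : ℂ) / (inner ℂ (D.kfun lam) (D.kfun lam) : ℂ)) • D.kfun lam) : ℂ) = 0 := by
    intro z w hz hw
    have hterm : ∀ i : Fin d, (inner ℂ (D.kfun w) (Φ i (ContinuousLinearMap.adjoint (Φ i) (D.kfun z))) : ℂ)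
        = conj ((u (mobius lam z)) i) * ((u (mobius lam w)) i) * inner ℂ (D.kfun w) (D.kfun z) := by
      intro i
      rw [← ContinuousLinearMap.adjoint_inner_left, hΦ i w hw, hΦ i z hz, inner_smul_left,
        inner_smul_right]
      rw [starRingEnd_self_apply]
      ring
    have hsum : (inner ℂ ((u (mobius lam z))) ((u (mobius lam w))) : ℂ)
        = ∑ i : Fin d, conj ((u (mobius lam z)) i) * ((u (mobius lam w)) i) := by
      rw [PiLp.inner_apply]
      simp [RCLike.inner_apply, mul_comm]
    rw [inner_sub_right, inner_sub_right, inner_sum, inner_smul_right]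
    simp only [hterm]
    rw [← Finset.sum_mul, ← hsum, LinearIsometryEquiv.inner_map_map,
      mobius_inner lam z w hlam (one_sub_inner_ne_zero hz hlam.le)
        (one_sub_inner_ne_zero hlam hw.le),
      D.kernel_eq w z hw hz, D.kernel_eq lam z hlam hz, D.kernel_eq w lam hw hlam,
      D.kernel_eq lam lam hlam hlam, inner_self_c]
    have h1 : (1 : ℂ) - inner ℂ z w ≠ 0 := one_sub_inner_ne_zero hz hw.le
    have h2 : (1 : ℂ) - inner ℂ z lam ≠ 0 := one_sub_inner_ne_zero hz hlam.le
    have h3 : (1 : ℂ) - inner ℂ lam w ≠ 0 := one_sub_inner_ne_zero hlam hw.le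
    have h4 : (1 : ℂ) - (‖lam‖ : ℂ) ^ 2 ≠ 0 := by
      rw [← inner_self_c]; exact one_sub_inner_ne_zero hlam hlam.le
    set p : ℂ := (inner ℂ z w : ℂ) with hp
    set q : ℂ := (inner ℂ z lam : ℂ) with hqq
    set r : ℂ := (inner ℂ lam w : ℂ) with hrr
    set nl : ℂ := ((‖lam‖ : ℝ) : ℂ) with hnl2
    field_simp
    ring
  have hker0 : ∀ z : Ed d, ‖z‖ < 1 →
      D.kfun z - ∑ i : Fin d, Φ i (ContinuousLinearMap.adjoint (Φ i) (D.kfun z)) -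
        ((inner ℂ (D.kfun lam) (D.kfun z) : ℂ) / (inner ℂ (D.kfun lam) (D.kfun lam) : ℂ)) • D.kfun lam = 0 := by
    intro z hz
    apply Dense.eq_zero_of_inner_right (𝕜 := ℂ) D.dense_span
    intro v hv
    induction hv using Submodule.span_induction with
    | mem x hx =>
      obtain ⟨w, hw, rfl⟩ := hx
      exact hinner z w hz hw
    | zero => simp
    | add x y hx hy ihx ihy => rw [inner_add_left, ihx, ihy, add_zero]
    | smul a x hx ih => rw [inner_smul_left, ih, mul_zero]
  have part1 : ∀ ξ : H, ξ - ∑ i : Fin d, Φ i (ContinuousLinearMap.adjoint (Φ i) ξ) =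
      ((inner ℂ (D.kfun lam) ξ : ℂ) / (inner ℂ (D.kfun lam) (D.kfun lam) : ℂ)) • D.kfun lam := by
    set c : ℂ := (inner ℂ (D.kfun lam) (D.kfun lam) : ℂ) with hc
    set T : H →L[ℂ] H := ContinuousLinearMap.id ℂ H - (∑ i : Fin d, Φ i ∘L ContinuousLinearMap.adjoint (Φ i)) -
      ((innerSL ℂ (D.kfun lam)).smulRight (c⁻¹ • D.kfun lam)) with hT
    have happ : ∀ ξ : H, T ξ = ξ - ∑ i : Fin d, Φ i (ContinuousLinearMap.adjoint (Φ i) ξ) -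
        ((inner ℂ (D.kfun lam) ξ : ℂ) / c) • D.kfun lam := by
      intro ξ
      rw [hT]
      simp only [ContinuousLinearMap.sub_apply, ContinuousLinearMap.id_apply,
        ContinuousLinearMap.sum_apply, ContinuousLinearMap.comp_apply,
        ContinuousLinearMap.smulRight_apply, innerSL_apply_apply]
      rw [div_eq_mul_inv, ← smul_smul]
    have hT0 : T = 0 := by
      apply ContinuousLinearMap.ext_on D.dense_span
      rintro x ⟨z, hz, rfl⟩
      rw [ContinuousLinearMap.zero_apply, happ]
      exact hker0 z hz
    intro ξ
    have h := DFunLike.congr_fun hT0 ξ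
    rw [happ, ContinuousLinearMap.zero_apply] at h
    exact sub_eq_zero.mp h
  refine ⟨part1, ?_⟩
  have hm0 : mobius lam lam = 0 := mobius_self lam hlam
  ext ξ
  simp only [Set.mem_range, Set.mem_setOf_eq]
  constructor
  · rintro ⟨v, rfl⟩
    rw [inner_sum]
    apply Finset.sum_eq_zero
    intro i _
    rw [← ContinuousLinearMap.adjoint_inner_left, hΦ i lam hlam, hm0]
    simp
  · intro hξ
    refine ⟨fun i => ContinuousLinearMap.adjoint (Φ i) ξ, ?_⟩
    have h := part1 ξ
    rw [hξ, zero_div, zero_smul, sub_eq_zero] at h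
    exact h.symm
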